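/- One has E_0 E*_0 E_d E*_d = (ϕ_1 ϕ_2 ⋯ ϕ_d / (τ_d(θ_d) η*_d(θ*_0))) · E_0 E*_d, where τ_d(θ_d) = (θ_d−θ_0)⋯(θ_d−θ_{d−1}) and η*_d(θ*_0) = (θ*_0−θ*_d)⋯(θ*_0−θ*_1) are nonzero since θ_0,…,θ_d are mutually distinct and θ*_0,…,θ*_d are mutually distinct. -/

import Mathlib

open Polynomial Matrix Finset

noncomputable section

/-- The lower bidiagonal matrix with diagonal entries `θ 0, …, θ d` and
subdiagonal entries `1`. -/
def matA {K : Type*} [Field K] (d : ℕ) (θ : ℕ → K) :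
    Matrix (Fin (d + 1)) (Fin (d + 1)) K :=
  Matrix.of fun i j =>
    if (i : ℕ) = (j : ℕ) then θ (i : ℕ)
    else if (i : ℕ) = (j : ℕ) + 1 then 1 else 0

/-- The upper bidiagonal matrix with diagonal entries `θs 0, …, θs d` and
superdiagonal entries `φ 1, …, φ d` (the `(i-1,i)`-entry is `φ i`). -/
def matAs {K : Type*} [Field K] (d : ℕ) (θs φ : ℕ → K) :
    Matrix (Fin (d + 1)) (Fin (d + 1)) K :=
  Matrix.of fun i j =>
    if (i : ℕ) = (j : ℕ) then θs (i : ℕ)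
    else if (j : ℕ) = (i : ℕ) + 1 then φ (j : ℕ) else 0

/-- The primitive idempotent `E_i = ∏_{j ≠ i} (M - θ_j I)/(θ_i - θ_j)` of a matrix `M`
with eigenvalues `θ 0, …, θ d`. -/
def primIdem {K : Type*} [Field K] (d : ℕ) (θ : ℕ → K)
    (M : Matrix (Fin (d + 1)) (Fin (d + 1)) K) (i : ℕ) :
    Matrix (Fin (d + 1)) (Fin (d + 1)) K :=
  Polynomial.aeval M (∏ j ∈ (Finset.range (d + 1)).erase i,
    (Polynomial.C ((θ i - θ j)⁻¹) * (Polynomial.X - Polynomial.C (θ j))))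

/-- `τ_i(λ) = (λ - θ_0)(λ - θ_1)⋯(λ - θ_{i-1})`. -/
def tauPoly {K : Type*} [Field K] (θ : ℕ → K) (i : ℕ) : Polynomial K :=
  ∏ k ∈ Finset.range i, (Polynomial.X - Polynomial.C (θ k))

/-- `η_i(λ) = (λ - θ_d)(λ - θ_{d-1})⋯(λ - θ_{d-i+1})`. -/
def etaPoly {K : Type*} [Field K] (d : ℕ) (θ : ℕ → K) (i : ℕ) : Polynomial K :=
  ∏ k ∈ Finset.range i, (Polynomial.X - Polynomial.C (θ (d - k)))

/-!
Write `e₀, …, e_d` for the standard basis. Each primitive idempotent is a scalar times a product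
of factors `M - θ_j I`, and `A`, `A*` are bidiagonal, so these factors walk down a flag of the
basis: `E*_d` kills `e₀, …, e_{d-1}`, `E₀` kills `e₁, …, e_d`, and (via `Aᵀ`) the rows
`0, …, d-1` of `E_d` vanish. Hence `E_d E*_d = tr(E_d E*_d) • e_d e_dᵀ`, and both sides of the
identity are multiples of `E₀ e₀ e_dᵀ` whose coefficients involve the `(0, d)`-entries of `E*_0`
and `E*_d`. Only the leading term of a degree `d` polynomial in the bidiagonal `A*` reaches that
corner, so these entries are the normalising constants times `φ₁ ⋯ φ_d`.

The trace is a similarity invariant. In the basis `v`, `A` and `A*` are again bidiagonal, with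
diagonals `θ_d, …, θ_0` and `θ*_0, …, θ*_d` and superdiagonal `ϕ`. There `E_d` is supported on
column `0` and `E*_d` on column `d`, so the trace is the product of two corner entries, and the
same corner argument gives `tr(E_d E*_d) = ϕ₁ ⋯ ϕ_d / (τ_d(θ_d) τ*_d(θ*_d))`.
-/

theorem range_succ_erase_self (d : ℕ) : (range (d + 1)).erase d = range d := by
  rw [range_add_one, erase_insert notMem_range_self]

theorem range_succ_erase_zero (d : ℕ) : (range (d + 1)).erase 0 = Icc 1 d := by
  ext j
  simp only [mem_erase, mem_range, mem_Icc]
  omega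

theorem prod_Icc_one_eq_prod_range_sub {M : Type*} [CommMonoid M] (f : ℕ → M) (d : ℕ) :
    ∏ j ∈ Icc 1 d, f j = ∏ j ∈ range d, f (d - j) := by
  refine prod_nbij' (fun j => d - j) (fun j => d - j) ?_ ?_ ?_ ?_ ?_ <;>
    intro j hj <;> simp only [mem_Icc, mem_range] at hj ⊢ <;> first | omega | congr 1; omega

section LoweringChain

variable {R : Type*} [CommRing R] {n : Type*} [Fintype n] [DecidableEq n]

theorem aeval_X_sub_C_mulVec (M : Matrix n n R) (c : R) (y : n → R) :
    aeval M (X - C c) *ᵥ y = M *ᵥ y - c • y := by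
  rw [map_sub, aeval_X, aeval_C, sub_mulVec, algebraMap_eq_diagonal, Pi.algebraMap_def,
    Algebra.algebraMap_self, RingHom.id_apply, ← smul_one_eq_diagonal, smul_mulVec,
    one_mulVec]

theorem aeval_mul_mulVec (M : Matrix n n R) (p q : R[X]) (y : n → R) :
    aeval M (p * q) *ᵥ y = aeval M p *ᵥ (aeval M q *ᵥ y) := by
  rw [map_mul, mulVec_mulVec]

structure IsLoweringChain (M : Matrix n n R) (d : ℕ) (a b : ℕ → R) (x : ℕ → n → R) : Prop where
  first : M *ᵥ x 0 = a 0 • x 0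
  succ : ∀ i < d, M *ᵥ x (i + 1) = a (i + 1) • x (i + 1) + b (i + 1) • x i

def tailSpan (d : ℕ) (x : ℕ → n → R) (k : ℕ) : Submodule R (n → R) :=
  Submodule.span R (x '' Set.Icc k d)

namespace IsLoweringChain

variable {M : Matrix n n R} {d : ℕ} {a b : ℕ → R} {x : ℕ → n → R}

theorem aeval_X_sub_C_mulVec_succ (hx : IsLoweringChain M d a b x) {i : ℕ} (hi : i < d) :
    aeval M (X - C (a (i + 1))) *ᵥ x (i + 1) = b (i + 1) • x i := by
  rw [aeval_X_sub_C_mulVec, hx.succ i hi, add_sub_cancel_left]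

theorem aeval_prod_range_mulVec_eq_zero (hx : IsLoweringChain M d a b x) {k m : ℕ}
    (hk : k ≤ d) (hkm : k < m) :
    aeval M (∏ j ∈ range m, (X - C (a j))) *ᵥ x k = 0 := by
  have hsucc : ∀ k ≤ d, aeval M (∏ j ∈ range (k + 1), (X - C (a j))) *ᵥ x k = 0 := by
    intro k hk
    induction k with
    | zero => rw [prod_range_one, aeval_X_sub_C_mulVec, hx.first, sub_self]
    | succ k ih =>
      rw [prod_range_succ, aeval_mul_mulVec, hx.aeval_X_sub_C_mulVec_succ (by omega),
        mulVec_smul, ih (by omega), smul_zero]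
  rw [← prod_range_mul_prod_Ico _ hkm, mul_comm, aeval_mul_mulVec, hsucc k hk, mulVec_zero]

theorem aeval_prod_Icc_mulVec (hx : IsLoweringChain M d a b x) {k : ℕ} (hk : k ≤ d) :
    aeval M (∏ j ∈ Icc 1 k, (X - C (a j))) *ᵥ x k = (∏ j ∈ Icc 1 k, b j) • x 0 := by
  induction k with
  | zero => simp
  | succ k ih =>
    rw [prod_Icc_succ_top (by omega), prod_Icc_succ_top (by omega), aeval_mul_mulVec,
      hx.aeval_X_sub_C_mulVec_succ (by omega), mulVec_smul, ih (by omega), smul_smul,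
      mul_comm]

omit [Fintype n] [DecidableEq n] in
theorem tailSpan_antitone {k l : ℕ} (h : k ≤ l) : tailSpan d x l ≤ tailSpan d x k :=
  Submodule.span_mono (Set.image_mono (Set.Icc_subset_Icc_left h))

omit [DecidableEq n] in
theorem mulVec_mem_tailSpan (hx : IsLoweringChain M d a b x) {k : ℕ} {y : n → R}
    (hy : y ∈ tailSpan d x k) : M *ᵥ y ∈ tailSpan d x (k - 1) := by
  have hmem : ∀ {i}, k - 1 ≤ i → i ≤ d → x i ∈ tailSpan d x (k - 1) := fun h1 h2 =>
    Submodule.subset_span ⟨_, ⟨h1, h2⟩, rfl⟩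
  suffices tailSpan d x k ≤ (tailSpan d x (k - 1)).comap M.mulVecLin from this hy
  refine Submodule.span_le.mpr ?_
  rintro _ ⟨i, ⟨hki, hid⟩, rfl⟩
  rcases i with _ | i
  · simpa [hx.first] using Submodule.smul_mem _ (a 0) (hmem (by omega) hid)
  · simpa [hx.succ i hid] using add_mem (Submodule.smul_mem _ (a (i + 1))
      (hmem (by omega) hid)) (Submodule.smul_mem _ (b (i + 1)) (hmem (by omega) (by omega)))

theorem pow_mulVec_mem_tailSpan (hx : IsLoweringChain M d a b x) (j : ℕ) :
    (M ^ j) *ᵥ x d ∈ tailSpan d x (d - j) := by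
  induction j with
  | zero =>
    rw [pow_zero, one_mulVec, Nat.sub_zero]
    exact Submodule.subset_span ⟨d, ⟨le_rfl, le_rfl⟩, rfl⟩
  | succ j ih =>
    rw [pow_succ', ← mulVec_mulVec, show d - (j + 1) = d - j - 1 by omega]
    exact hx.mulVec_mem_tailSpan ih

theorem aeval_mulVec_mem_tailSpan_one (hx : IsLoweringChain M d a b x) {p : R[X]}
    (hp : p.degree < d) : aeval M p *ᵥ x d ∈ tailSpan d x 1 := by
  rw [aeval_eq_sum_range, sum_mulVec]
  refine Submodule.sum_mem _ fun i _ => ?_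
  rw [smul_mulVec]
  by_cases hi : i < d
  · exact Submodule.smul_mem _ _
      (tailSpan_antitone (by omega) (hx.pow_mulVec_mem_tailSpan i))
  · rw [(degree_lt_iff_coeff_zero p d).mp hp i (by omega), zero_smul]
    exact zero_mem _

theorem aeval_monic_mulVec_sub_mem [Nontrivial R] (hx : IsLoweringChain M d a b x) {p : R[X]}
    (hp : p.Monic) (hpd : p.natDegree = d) :
    aeval M p *ᵥ x d - (∏ j ∈ Icc 1 d, b j) • x 0 ∈ tailSpan d x 1 := by
  set q : R[X] := ∏ j ∈ Icc 1 d, (X - C (a j))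
  have hq : q.Monic := monic_prod_of_monic _ _ fun j _ => monic_X_sub_C (a j)
  have hqd : q.natDegree = d := by
    rw [natDegree_prod_of_monic _ _ fun j _ => monic_X_sub_C (a j)]
    simp
  have hlt : (p - q).degree < d := by
    refine (degree_lt_iff_coeff_zero _ _).mpr fun m hm => ?_
    rw [coeff_sub]
    rcases hm.eq_or_lt with rfl | hm
    · rw [← hpd, hp.coeff_natDegree, hpd, ← hqd, hq.coeff_natDegree, sub_self]
    · rw [coeff_eq_zero_of_natDegree_lt (hpd ▸ hm), coeff_eq_zero_of_natDegree_lt (hqd ▸ hm),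
        sub_self]
  have := hx.aeval_mulVec_mem_tailSpan_one hlt
  rwa [map_sub, sub_mulVec, hx.aeval_prod_Icc_mulVec le_rfl] at this

end IsLoweringChain

end LoweringChain

section Similarity

variable {R : Type*} [CommRing R] {n : Type*} [Fintype n] [DecidableEq n]

theorem aeval_mul_eq_mul_aeval {M N P : Matrix n n R} (h : M * P = P * N) (p : R[X]) :
    aeval M p * P = P * aeval N p := by
  have hpow : ∀ k : ℕ, M ^ k * P = P * N ^ k := fun k => (SemiconjBy.pow_right h.symm k).symm
  induction p using Polynomial.induction_on' with
  | add p q hp hq => rw [map_add, map_add, add_mul, mul_add, hp, hq]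
  | monomial k c =>
    simp only [aeval_monomial, Algebra.algebraMap_eq_smul_one, smul_mul_assoc, one_mul,
      mul_smul_comm, hpow]

theorem aeval_transpose (M : Matrix n n R) (p : R[X]) :
    aeval Mᵀ p = (aeval M p)ᵀ := by
  induction p using Polynomial.induction_on' with
  | add p q hp hq => simp [hp, hq]
  | monomial k c => simp [transpose_pow, Algebra.algebraMap_eq_smul_one]

theorem trace_eq_of_mul_eq_mul {X Y P : Matrix n n R} (hP : IsUnit P) (h : X * P = P * Y) :
    trace X = trace Y := by
  have hdet : IsUnit P.det := (isUnit_iff_isUnit_det P).mp hP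
  calc trace X = trace (P * (Y * P⁻¹)) := by
        rw [← mul_assoc, ← h, mul_nonsing_inv_cancel_right _ _ hdet]
    _ = trace Y := by rw [trace_mul_comm, mul_assoc, nonsing_inv_mul _ hdet, mul_one]

theorem IsLoweringChain.mul_eq_mul {M N P : Matrix n n R} {d : ℕ} {a b : ℕ → R}
    {x y : ℕ → n → R} (hN : IsLoweringChain N d a b x) (hM : IsLoweringChain M d a b y)
    (hPx : ∀ i ≤ d, P *ᵥ x i = y i) (hx : ∀ j, ∃ i ≤ d, x i = Pi.single j 1) :
    M * P = P * N := by
  refine ext_of_mulVec_single fun j => ?_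
  obtain ⟨i, hi, hxi⟩ := hx j
  rw [← hxi, ← mulVec_mulVec, ← mulVec_mulVec, hPx i hi]
  rcases i with _ | i
  · rw [hM.first, hN.first, mulVec_smul, hPx 0 hi]
  · rw [hM.succ i hi, hN.succ i hi, mulVec_add, mulVec_smul, mulVec_smul, hPx _ hi,
      hPx i (by omega)]

theorem mul_single_self_of_mulVec_single_eq_zero {X : Matrix n n R} {p : n}
    (h : ∀ k ≠ p, X *ᵥ Pi.single k 1 = 0) :
    X * single p p 1 = X := by
  ext i k
  by_cases hk : k = p
  · subst hk
    rw [mul_single_apply_same, mul_one]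
  · rw [mul_single_apply_of_ne _ _ _ _ _ hk, ← col_apply X k i, ← mulVec_single_one, h k hk,
      Pi.zero_apply]

theorem mul_mul_single_of_mul_single_self {X Y : Matrix n n R} {i : n} (j : n)
    (hX : X * single i i 1 = X) : X * Y * single j j 1 = Y i j • (X * single i j 1) := by
  calc X * Y * single j j 1 = X * (single i i 1 * Y * single j j 1) := by
        nth_rewrite 1 [← hX]
        simp only [mul_assoc]
    _ = Y i j • (X * single i j 1) := by
        rw [single_mul_mul_single, one_mul, mul_one, ← mul_smul_comm, smul_single, smul_eq_mul,
          mul_one]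

theorem eq_trace_smul_single {X : Matrix n n R} {i : n} (h₁ : single i i 1 * X = X)
    (h₂ : X * single i i 1 = X) : X = trace X • single i i 1 := by
  have htrace : trace X = X i i := by
    conv_lhs => rw [← h₁]
    rw [trace_single_mul, one_smul]
  calc X = single i i 1 * X * single i i 1 := by rw [h₁, h₂]
    _ = trace X • single i i 1 := by
        rw [single_mul_mul_single, one_mul, mul_one, htrace, smul_single, smul_eq_mul, mul_one]

theorem trace_mul_of_mul_single_self {X Y : Matrix n n R} {i j : n}
    (hX : X * single i i 1 = X) (hY : Y * single j j 1 = Y) :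
    trace (X * Y) = X j i * Y i j := by
  rw [← hY, ← mul_assoc, mul_mul_single_of_mul_single_self j hX, trace_smul, trace_mul_single,
    hY]
  simp [mul_comm]

end Similarity

def unitVec (K : Type*) [Zero K] [One K] (d i : ℕ) : Fin (d + 1) → K :=
  fun r => if (r : ℕ) = i then 1 else 0

section Bidiagonal

variable {K : Type*} [Field K] {d : ℕ}

theorem unitVec_val (k : Fin (d + 1)) : unitVec K d k = Pi.single k 1 := by
  ext r
  simp [unitVec, Pi.single_apply, Fin.ext_iff]

theorem mulVec_unitVec (M : Matrix (Fin (d + 1)) (Fin (d + 1)) K) {i : ℕ} (hi : i ≤ d) :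
    M *ᵥ unitVec K d i = fun r => M r ⟨i, by omega⟩ := by
  rw [show unitVec K d i = unitVec K d (⟨i, by omega⟩ : Fin (d + 1)) from rfl, unitVec_val,
    mulVec_single_one]
  rfl

theorem isLoweringChain_matAs (a b : ℕ → K) :
    IsLoweringChain (matAs d a b) d a b (unitVec K d) := by
  constructor
  · ext r
    simp only [mulVec_unitVec _ (Nat.zero_le d), matAs, of_apply, Pi.smul_apply, unitVec,
      smul_eq_mul]
    split_ifs <;> first | omega | simp_all
  · intro i hi
    ext r
    simp only [mulVec_unitVec _ hi, matAs, of_apply, Pi.add_apply, Pi.smul_apply, unitVec,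
      smul_eq_mul]
    split_ifs <;> first | omega | simp_all

theorem isLoweringChain_matA_rev (a : ℕ → K) :
    IsLoweringChain (matA d a) d (fun t => a (d - t)) 1 fun t => unitVec K d (d - t) := by
  constructor
  · ext r
    simp only [mulVec_unitVec _ (Nat.sub_le d 0), matA, of_apply, Pi.smul_apply, unitVec,
      smul_eq_mul]
    split_ifs <;> first | omega | simp_all
  · intro i hi
    ext r
    simp only [mulVec_unitVec _ (Nat.sub_le d _), matA, of_apply, Pi.add_apply, Pi.smul_apply,
      unitVec, smul_eq_mul, Pi.one_apply]
    split_ifs <;> first | omega | simp_all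

theorem matA_transpose (a : ℕ → K) : (matA d a)ᵀ = matAs d a 1 := by
  ext i j
  simp only [transpose_apply, matA, matAs, of_apply, Pi.one_apply]
  split_ifs <;> first | omega | simp_all

end Bidiagonal

section Idempotents

variable {K : Type*} [Field K] {d : ℕ}

theorem primIdem_eq_smul_aeval (c : ℕ → K) (M : Matrix (Fin (d + 1)) (Fin (d + 1)) K) (i : ℕ) :
    primIdem d c M i = (∏ j ∈ (range (d + 1)).erase i, (c i - c j))⁻¹ •
      aeval M (∏ j ∈ (range (d + 1)).erase i, (X - C (c j))) := by
  rw [primIdem, prod_mul_distrib, ← map_prod, map_mul, aeval_C, Algebra.algebraMap_eq_smul_one,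
    smul_mul_assoc, one_mul, prod_inv_distrib]

theorem primIdem_rev (c : ℕ → K) (M : Matrix (Fin (d + 1)) (Fin (d + 1)) K) {i : ℕ}
    (hi : i ≤ d) : primIdem d (fun j => c (d - j)) M i = primIdem d c M (d - i) := by
  unfold primIdem
  congr 1
  refine prod_nbij' (fun j => d - j) (fun j => d - j) ?_ ?_ ?_ ?_ ?_ <;>
    intro j hj <;> simp only [mem_erase, mem_range] at hj ⊢ <;> omega

theorem primIdem_transpose (c : ℕ → K) (M : Matrix (Fin (d + 1)) (Fin (d + 1)) K) (i : ℕ) :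
    (primIdem d c M i)ᵀ = primIdem d c Mᵀ i := by
  rw [primIdem, primIdem, aeval_transpose]

theorem primIdem_matAs_last_mul_single_last (a b : ℕ → K) :
    primIdem d a (matAs d a b) d * single (Fin.last d) (Fin.last d) 1 =
      primIdem d a (matAs d a b) d := by
  refine mul_single_self_of_mulVec_single_eq_zero fun k hk => ?_
  rw [← unitVec_val, primIdem_eq_smul_aeval, range_succ_erase_self, smul_mulVec,
    (isLoweringChain_matAs a b).aeval_prod_range_mulVec_eq_zero k.is_le (Fin.val_lt_last hk),
    smul_zero]

theorem primIdem_matA_zero_mul_single_zero (a : ℕ → K) :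
    primIdem d a (matA d a) 0 * single 0 0 1 = primIdem d a (matA d a) 0 := by
  refine mul_single_self_of_mulVec_single_eq_zero fun k hk => ?_
  have hk' : 0 < (k : ℕ) := Fin.pos_iff_ne_zero.mpr hk
  rw [← unitVec_val, show (k : ℕ) = d - (d - k) by omega, primIdem_eq_smul_aeval,
    range_succ_erase_zero, prod_Icc_one_eq_prod_range_sub fun j => X - C (a j), smul_mulVec,
    (isLoweringChain_matA_rev a).aeval_prod_range_mulVec_eq_zero (Nat.sub_le d k) (by omega),
    smul_zero]

theorem tailSpan_unitVec_one_apply_zero {y : Fin (d + 1) → K}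
    (hy : y ∈ tailSpan d (unitVec K d) 1) : y 0 = 0 := by
  suffices tailSpan d (unitVec K d) 1 ≤ LinearMap.ker (LinearMap.proj 0) from this hy
  refine Submodule.span_le.mpr ?_
  rintro _ ⟨i, ⟨hi, -⟩, rfl⟩
  exact if_neg (by simp only [Fin.val_zero]; omega)

theorem primIdem_matAs_apply_zero_last (c a b : ℕ → K) {i : ℕ} (hi : i ≤ d) :
    primIdem d c (matAs d a b) i 0 (Fin.last d) =
      (∏ j ∈ (range (d + 1)).erase i, (c i - c j))⁻¹ * ∏ j ∈ Icc 1 d, b j := by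
  set p : K[X] := ∏ j ∈ (range (d + 1)).erase i, (X - C (c j))
  have hp : p.Monic := monic_prod_of_monic _ _ fun j _ => monic_X_sub_C (c j)
  have hpd : p.natDegree = d := by
    rw [natDegree_prod_of_monic _ _ fun j _ => monic_X_sub_C (c j)]
    simp [card_erase_of_mem (mem_range.mpr (Nat.lt_succ_of_le hi))]
  have hcorner := tailSpan_unitVec_one_apply_zero
    ((isLoweringChain_matAs a b).aeval_monic_mulVec_sub_mem hp hpd)
  rw [mulVec_unitVec _ le_rfl, Pi.sub_apply, sub_eq_zero] at hcorner
  rw [primIdem_eq_smul_aeval, Matrix.smul_apply, smul_eq_mul, Fin.last, hcorner]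
  simp [unitVec]

theorem single_last_mul_primIdem_matA_last (a : ℕ → K) :
    single (Fin.last d) (Fin.last d) 1 * primIdem d a (matA d a) d =
      primIdem d a (matA d a) d := by
  apply transpose_injective
  rw [transpose_mul, transpose_single, primIdem_transpose, matA_transpose,
    primIdem_matAs_last_mul_single_last]

theorem primIdem_matA_apply_last_zero (c a : ℕ → K) {i : ℕ} (hi : i ≤ d) :
    primIdem d c (matA d a) i (Fin.last d) 0 =
      (∏ j ∈ (range (d + 1)).erase i, (c i - c j))⁻¹ := by
  rw [← transpose_apply (primIdem d c (matA d a) i), primIdem_transpose, matA_transpose,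
    primIdem_matAs_apply_zero_last c a 1 hi]
  simp

theorem primIdem_mul_eq_mul_primIdem (c : ℕ → K) (i : ℕ)
    {M N P : Matrix (Fin (d + 1)) (Fin (d + 1)) K} (h : M * P = P * N) :
    primIdem d c M i * P = P * primIdem d c N i :=
  aeval_mul_eq_mul_aeval h _

end Idempotents

theorem eval_tauPoly {K : Type*} [Field K] (θ : ℕ → K) (i : ℕ) (x : K) :
    (tauPoly θ i).eval x = ∏ k ∈ range i, (x - θ k) := by
  simp [tauPoly, eval_prod]

theorem eval_etaPoly {K : Type*} [Field K] (d : ℕ) (θ : ℕ → K) (i : ℕ) (x : K) :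
    (etaPoly d θ i).eval x = ∏ k ∈ range i, (x - θ (d - k)) := by
  simp [etaPoly, eval_prod]

theorem trace_primIdem_last_mul_primIdem_last {K : Type*} [Field K] {d : ℕ} {θ θs φ ϕ : ℕ → K}
    {v : ℕ → Fin (d + 1) → K}
    (hvli : LinearIndependent K fun i : Fin (d + 1) => v (i : ℕ))
    (hv1 : ∀ i < d, (matA d θ).mulVec (v i) - θ (d - i) • v i = v (i + 1))
    (hv2 : (matA d θ).mulVec (v d) - θ 0 • v d = 0)
    (hv3 : ∀ i, 1 ≤ i → i ≤ d →
      (matAs d θs φ).mulVec (v i) - θs i • v i = ϕ i • v (i - 1))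
    (hv4 : (matAs d θs φ).mulVec (v 0) - θs 0 • v 0 = 0) :
    trace (primIdem d θ (matA d θ) d * primIdem d θs (matAs d θs φ) d) =
      (∏ j ∈ range d, (θ d - θ j))⁻¹ *
        ((∏ j ∈ range d, (θs d - θs j))⁻¹ * ∏ j ∈ Icc 1 d, ϕ j) := by
  set θ' : ℕ → K := fun i => θ (d - i)
  set P : Matrix (Fin (d + 1)) (Fin (d + 1)) K := Matrix.of fun r j => v j r
  have hP : IsUnit P := linearIndependent_cols_iff_isUnit.mp hvli
  have hPv : ∀ i ≤ d, P *ᵥ unitVec K d i = v i := fun i hi => by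
    rw [mulVec_unitVec _ hi]
    rfl
  have hvs : IsLoweringChain (matAs d θs φ) d θs ϕ v :=
    ⟨sub_eq_zero.mp hv4, fun i hi => by
      rw [← sub_eq_iff_eq_add', hv3 (i + 1) (by omega) (by omega), Nat.add_sub_cancel]⟩
  have hva : IsLoweringChain (matA d θ) d (fun t => θ' (d - t)) 1 fun t => v (d - t) :=
    ⟨by simpa [θ', sub_eq_zero] using hv2, fun i hi => by
      rw [Pi.one_apply, one_smul, ← sub_eq_iff_eq_add', hv1 (d - (i + 1)) (by omega),
        show d - (i + 1) + 1 = d - i by omega]⟩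
  have hBP : matAs d θs φ * P = P * matAs d θs ϕ :=
    (isLoweringChain_matAs θs ϕ).mul_eq_mul hvs hPv fun j => ⟨j, j.is_le, unitVec_val j⟩
  have hAP : matA d θ * P = P * matA d θ' :=
    (isLoweringChain_matA_rev θ').mul_eq_mul hva (fun i _ => hPv _ (Nat.sub_le d i)) fun j =>
      ⟨d - j, Nat.sub_le _ _, by rw [Nat.sub_sub_self j.is_le, unitVec_val]⟩
  have hrev : primIdem d θ (matA d θ') d = primIdem d θ' (matA d θ') 0 :=
    (primIdem_rev θ _ (Nat.zero_le d)).symm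
  have hconj : primIdem d θ (matA d θ) d * primIdem d θs (matAs d θs φ) d * P =
      P * (primIdem d θ (matA d θ') d * primIdem d θs (matAs d θs ϕ) d) := by
    rw [mul_assoc, primIdem_mul_eq_mul_primIdem _ _ hBP, ← mul_assoc,
      primIdem_mul_eq_mul_primIdem _ _ hAP, mul_assoc]
  rw [trace_eq_of_mul_eq_mul hP hconj,
    trace_mul_of_mul_single_self (by rw [hrev]; exact primIdem_matA_zero_mul_single_zero θ')
      (primIdem_matAs_last_mul_single_last θs ϕ),
    primIdem_matA_apply_last_zero θ θ' le_rfl, primIdem_matAs_apply_zero_last θs θs ϕ le_rfl,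
    range_succ_erase_self]

theorem EZero_EsZero_ED_EsD_general {K : Type*} [Field K] (d : ℕ) (θ θs φ ϕ : ℕ → K)
    (v : ℕ → Fin (d + 1) → K)
    (hvli : LinearIndependent K fun i : Fin (d + 1) => v (i : ℕ))
    (hv1 : ∀ i < d, (matA d θ).mulVec (v i) - θ (d - i) • v i = v (i + 1))
    (hv2 : (matA d θ).mulVec (v d) - θ 0 • v d = 0)
    (hv3 : ∀ i, 1 ≤ i → i ≤ d →
      (matAs d θs φ).mulVec (v i) - θs i • v i = ϕ i • v (i - 1))
    (hv4 : (matAs d θs φ).mulVec (v 0) - θs 0 • v 0 = 0) :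
    primIdem d θ (matA d θ) 0 * primIdem d θs (matAs d θs φ) 0 * primIdem d θ (matA d θ) d * primIdem d θs (matAs d θs φ) d = ((∏ k ∈ Finset.Icc (1) (d), ϕ k) / ((tauPoly θ d).eval (θ d) * (etaPoly d θs d).eval (θs 0))) • (primIdem d θ (matA d θ) 0 * primIdem d θs (matAs d θs φ) d) := by
  have hE0 := primIdem_matA_zero_mul_single_zero (d := d) θ
  have hEsd := primIdem_matAs_last_mul_single_last (d := d) θs φ
  have hEdEsd := eq_trace_smul_single
    (X := primIdem d θ (matA d θ) d * primIdem d θs (matAs d θs φ) d) (i := Fin.last d)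
    (by rw [← mul_assoc, single_last_mul_primIdem_matA_last]) (by rw [mul_assoc, hEsd])
  rw [mul_assoc _ (primIdem d θ (matA d θ) d), hEdEsd, mul_smul_comm,
    mul_mul_single_of_mul_single_self _ hE0,
    trace_primIdem_last_mul_primIdem_last hvli hv1 hv2 hv3 hv4]
  conv_rhs => rw [← hEsd, ← mul_assoc, mul_mul_single_of_mul_single_self _ hE0]
  rw [smul_smul, smul_smul, primIdem_matAs_apply_zero_last θs θs φ (Nat.zero_le d),
    primIdem_matAs_apply_zero_last θs θs φ le_rfl, range_succ_erase_zero, range_succ_erase_self,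
    eval_tauPoly, eval_etaPoly, prod_Icc_one_eq_prod_range_sub (fun j => θs 0 - θs j),
    div_eq_mul_inv, mul_inv]
  congr 1
  ring

theorem EZero_EsZero_ED_EsD {K : Type*} [Field K] (d : ℕ) (θ θs φ ϕ : ℕ → K)
    (hθ : ∀ i ≤ d, ∀ j ≤ d, θ i = θ j → i = j)
    (hθs : ∀ i ≤ d, ∀ j ≤ d, θs i = θs j → i = j)
    (hφ : ∀ i, 1 ≤ i → i ≤ d → φ i ≠ 0)
    (hE0 : ∀ i ≤ d, ∀ j ≤ d, 1 < |(i : ℤ) - (j : ℤ)| →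
      primIdem d θ (matA d θ) i * matAs d θs φ * primIdem d θ (matA d θ) j = 0)
    (hE1 : ∀ i ≤ d, ∀ j ≤ d, |(i : ℤ) - (j : ℤ)| = 1 →
      primIdem d θ (matA d θ) i * matAs d θs φ * primIdem d θ (matA d θ) j ≠ 0)
    (hEs0 : ∀ i ≤ d, ∀ j ≤ d, 1 < |(i : ℤ) - (j : ℤ)| →
      primIdem d θs (matAs d θs φ) i * matA d θ * primIdem d θs (matAs d θs φ) j = 0)
    (hEs1 : ∀ i ≤ d, ∀ j ≤ d, |(i : ℤ) - (j : ℤ)| = 1 →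
      primIdem d θs (matAs d θs φ) i * matA d θ * primIdem d θs (matAs d θs φ) j ≠ 0)
    (hϕ : ∀ i, 1 ≤ i → i ≤ d → ϕ i ≠ 0)
    (v : ℕ → Fin (d + 1) → K)
    (hvli : LinearIndependent K fun i : Fin (d + 1) => v (i : ℕ))
    (hvsp : Submodule.span K (Set.range fun i : Fin (d + 1) => v (i : ℕ)) = ⊤)
    (hv1 : ∀ i < d, (matA d θ).mulVec (v i) - θ (d - i) • v i = v (i + 1))
    (hv2 : (matA d θ).mulVec (v d) - θ 0 • v d = 0)
    (hv3 : ∀ i, 1 ≤ i → i ≤ d →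
      (matAs d θs φ).mulVec (v i) - θs i • v i = ϕ i • v (i - 1))
    (hv4 : (matAs d θs φ).mulVec (v 0) - θs 0 • v 0 = 0) :
    primIdem d θ (matA d θ) 0 * primIdem d θs (matAs d θs φ) 0 * primIdem d θ (matA d θ) d * primIdem d θs (matAs d θs φ) d = ((∏ k ∈ Finset.Icc (1) (d), ϕ k) / ((tauPoly θ d).eval (θ d) * (etaPoly d θs d).eval (θs 0))) • (primIdem d θ (matA d θ) 0 * primIdem d θs (matAs d θs φ) d) :=
  EZero_EsZero_ED_EsD_general d θ θs φ ϕ v hvli hv1 hv2 hv3 hv4
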